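/- Let f : P¹ → P¹ be a rational map of degree d > 1, k ≥ 1 an integer, λ ∈ ℂ nonzero, and q a nonzero meromorphic k-differential on P¹ with f*q = λ·q. If x ∈ P¹ is a pole of q of order m := −ord_x(q) with m < k, then for every y ∈ f⁻¹(x) the local degree satisfies deg_y(f) ≤ k/(k − m). -/

import Mathlib

/-!
For `t(z) := ord_z(q) + k`, comparing orders in a local coordinate gives
`t(z) = deg_z(f) · t(f(z))` at every `z ∈ P¹` (at `∞` through the chart `w = 1/z`,
using `(f ∘ w⁻¹)^* = (w⁻¹)^* ∘ f^*`). If `f(y) = x` then `t(y) = deg_y(f) · (k - m)`.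
Were this `> k`, `y` would lie in `{t > k} = {ord q > 0}`, a finite set that is backward
invariant because `deg ≥ 1`; as `f` is surjective, `f` permutes it, and comparing the products
of `t` over it forces `deg_z(f) = 1` there. Then `t(y) = k - m ≤ k`.
-/

open Polynomial OnePoint

noncomputable section

/-- The Riemann sphere `P¹ = ℂ ∪ {∞}`. -/
abbrev P1 := OnePoint ℂ

namespace ParallelTensor

/-- Order of vanishing (negative at poles) of a nonzero rational function at a finite point. -/
def ordC (g : RatFunc ℂ) (x : ℂ) : ℤ :=
  (g.num.rootMultiplicity x : ℤ) - (g.denom.rootMultiplicity x : ℤ)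

/-- Composition `g ∘ f` of rational functions. -/
def comp (g f : RatFunc ℂ) : RatFunc ℂ :=
  Polynomial.aeval f g.num / Polynomial.aeval f g.denom

/-- Derivative of a rational function. -/
def deriv (f : RatFunc ℂ) : RatFunc ℂ :=
  algebraMap (Polynomial ℂ) (RatFunc ℂ)
      (Polynomial.derivative f.num * f.denom - f.num * Polynomial.derivative f.denom) /
    algebraMap (Polynomial ℂ) (RatFunc ℂ) (f.denom ^ 2)

/-- The (global) degree of a rational map. -/
def degRat (f : RatFunc ℂ) : ℕ := max f.num.natDegree f.denom.natDegree

/-- Evaluation of a rational map as a self-map of the Riemann sphere. -/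
def evalP1 (f : RatFunc ℂ) : P1 → P1 := fun x =>
  Option.elim x
    (if 0 < f.intDegree then (∞ : P1)
     else if f.intDegree < 0 then ((0 : ℂ) : P1)
     else ((f.num.leadingCoeff / f.denom.leadingCoeff : ℂ) : P1))
    (fun z => if f.denom.eval z = 0 then (∞ : P1)
              else ((f.num.eval z / f.denom.eval z : ℂ) : P1))

/-- Local degree of `f` at a finite point: the pole order at a pole, and the order of
vanishing of `f - f(z)` otherwise. -/
def locDegC (f : RatFunc ℂ) (z : ℂ) : ℕ :=
  if f.denom.eval z = 0 then f.denom.rootMultiplicity z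
  else (ordC (f - RatFunc.C (f.num.eval z / f.denom.eval z)) z).toNat

/-- Local degree (valency) of `f` at a point of the sphere; at `∞` it is computed in the
coordinate `w = 1/z`. -/
def locDeg (f : RatFunc ℂ) : P1 → ℕ := fun x =>
  Option.elim x (locDegC (comp f (RatFunc.X)⁻¹) 0) (locDegC f)

/-- Order of the meromorphic `k`-differential `q = g·dz^k` at a point of the sphere:
`ord_x(g)` at a finite point `x`, and at `∞` the order at `0` of `g(1/w)·(-w⁻²)^k`. -/
def ordDiff (k : ℕ) (g : RatFunc ℂ) : P1 → ℤ := fun x =>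
  Option.elim x (-g.intDegree - 2 * k) (ordC g)

/-- Pullback of the `k`-differential `q = g·dz^k` under `f`, namely `g(f(z))·f'(z)^k·dz^k`. -/
def pullback (k : ℕ) (f g : RatFunc ℂ) : RatFunc ℂ := comp g f * deriv f ^ k

/-- Ramification locus of `f`: the points of local degree at least 2. -/
def Ram (f : RatFunc ℂ) : Set P1 := {x | 2 ≤ locDeg f x}

/-- The postcritical set `⋃_{n ≥ 1} fⁿ(Ram_f)`. -/
def PostCrit (f : RatFunc ℂ) : Set P1 :=
  ⋃ (n : ℕ) (_ : 1 ≤ n), (evalP1 f)^[n] '' Ram f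

/-! ### Orders at finite points -/

local notation "ι" => algebraMap ℂ[X] (RatFunc ℂ)

lemma eval_num_ne_zero_or_eval_denom_ne_zero (g : RatFunc ℂ) (x : ℂ) :
    g.num.eval x ≠ 0 ∨ g.denom.eval x ≠ 0 := by
  obtain ⟨a, b, hab⟩ := RatFunc.isCoprime_num_denom g
  by_contra! h
  simpa [h.1, h.2] using congrArg (Polynomial.eval x) hab

lemma eq_num_mul_and_eq_denom_mul {g : RatFunc ℂ} {p q : ℂ[X]} (hq : q ≠ 0)
    (h : g = ι p / ι q) : ∃ s : ℂ[X], p = g.num * s ∧ q = g.denom * s := by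
  have hcross : g.num * q = p * g.denom := (RatFunc.num_mul_eq_mul_denom_iff hq).mpr h
  obtain ⟨s, hs⟩ : g.denom ∣ q :=
    (RatFunc.isCoprime_num_denom g).symm.dvd_of_dvd_mul_left ⟨p, by rw [hcross, mul_comm]⟩
  refine ⟨s, mul_left_cancel₀ (RatFunc.denom_ne_zero g) ?_, hs⟩
  rw [mul_comm _ p, ← hcross, hs]
  ring

lemma ordC_eq_of_eq_div {g : RatFunc ℂ} {p q : ℂ[X]} (hp : p ≠ 0) (hq : q ≠ 0)
    (h : g = ι p / ι q) (x : ℂ) :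
    ordC g x = (p.rootMultiplicity x : ℤ) - q.rootMultiplicity x := by
  obtain ⟨s, rfl, rfl⟩ := eq_num_mul_and_eq_denom_mul hq h
  rw [rootMultiplicity_mul hp, rootMultiplicity_mul hq, ordC]
  push_cast
  ring

lemma ordC_algebraMap {p : ℂ[X]} (hp : p ≠ 0) (x : ℂ) :
    ordC (ι p) x = p.rootMultiplicity x := by
  simpa [rootMultiplicity_eq_zero] using
    ordC_eq_of_eq_div (g := ι p) hp one_ne_zero (by simp) x

lemma ordC_C {c : ℂ} (hc : c ≠ 0) (x : ℂ) : ordC (RatFunc.C c) x = 0 := by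
  rw [← RatFunc.algebraMap_C, ordC_algebraMap (by simpa using hc), rootMultiplicity_C]
  rfl

lemma ordC_one (x : ℂ) : ordC 1 x = 0 := by
  simpa using ordC_C one_ne_zero x

lemma ordC_mul {a b : RatFunc ℂ} (ha : a ≠ 0) (hb : b ≠ 0) (x : ℂ) :
    ordC (a * b) x = ordC a x + ordC b x := by
  have hN := mul_ne_zero (RatFunc.num_ne_zero ha) (RatFunc.num_ne_zero hb)
  have hD := mul_ne_zero (RatFunc.denom_ne_zero a) (RatFunc.denom_ne_zero b)
  have h : a * b = ι (a.num * b.num) / ι (a.denom * b.denom) := by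
    rw [map_mul, map_mul, ← div_mul_div_comm, RatFunc.num_div_denom, RatFunc.num_div_denom]
  rw [ordC_eq_of_eq_div hN hD h, rootMultiplicity_mul hN, rootMultiplicity_mul hD, ordC, ordC]
  push_cast
  ring

lemma ordC_C_mul {c : ℂ} (hc : c ≠ 0) {g : RatFunc ℂ} (hg : g ≠ 0) (x : ℂ) :
    ordC (RatFunc.C c * g) x = ordC g x := by
  rw [ordC_mul (by simpa using hc) hg, ordC_C hc, zero_add]

lemma ordC_neg {a : RatFunc ℂ} (ha : a ≠ 0) (x : ℂ) : ordC (-a) x = ordC a x := by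
  simpa using ordC_C_mul (neg_ne_zero.mpr one_ne_zero) ha x

lemma ordC_inv {a : RatFunc ℂ} (ha : a ≠ 0) (x : ℂ) : ordC a⁻¹ x = -ordC a x := by
  have h := ordC_mul ha (inv_ne_zero ha) x
  rw [mul_inv_cancel₀ ha, ordC_one] at h
  omega

lemma ordC_div {a b : RatFunc ℂ} (ha : a ≠ 0) (hb : b ≠ 0) (x : ℂ) :
    ordC (a / b) x = ordC a x - ordC b x := by
  rw [div_eq_mul_inv, ordC_mul ha (inv_ne_zero hb), ordC_inv hb, sub_eq_add_neg]

lemma ordC_pow {a : RatFunc ℂ} (ha : a ≠ 0) (n : ℕ) (x : ℂ) :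
    ordC (a ^ n) x = n * ordC a x := by
  induction n with
  | zero => simp [ordC_one]
  | succ n ih =>
    rw [pow_succ, ordC_mul (pow_ne_zero n ha) ha, ih]
    push_cast
    ring

lemma ordC_multiset_prod {s : Multiset (RatFunc ℂ)} (hs : (0 : RatFunc ℂ) ∉ s) (x : ℂ) :
    ordC s.prod x = (s.map (ordC · x)).sum := by
  induction s using Multiset.induction_on with
  | empty => simp [ordC_one]
  | cons a s ih =>
    rw [Multiset.mem_cons, not_or] at hs
    rw [Multiset.prod_cons, ordC_mul (Ne.symm hs.1) (Multiset.prod_ne_zero hs.2),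
      ih hs.2, Multiset.map_cons, Multiset.sum_cons]

lemma min_ordC_le_ordC_add {a b : RatFunc ℂ} (ha : a ≠ 0) (hb : b ≠ 0) (hab : a + b ≠ 0)
    (x : ℂ) : min (ordC a x) (ordC b x) ≤ ordC (a + b) x := by
  have hD := mul_ne_zero (RatFunc.denom_ne_zero a) (RatFunc.denom_ne_zero b)
  have h : a + b = ι (a.num * b.denom + a.denom * b.num) / ι (a.denom * b.denom) := by
    rw [map_add, map_mul, map_mul, map_mul,
      ← div_add_div _ _ (by simp [RatFunc.denom_ne_zero]) (by simp [RatFunc.denom_ne_zero]),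
      RatFunc.num_div_denom, RatFunc.num_div_denom]
  have hN : a.num * b.denom + a.denom * b.num ≠ 0 := by
    rintro hN
    simp [hN, hab] at h
  have hadd := rootMultiplicity_add x hN
  rw [rootMultiplicity_mul (mul_ne_zero (RatFunc.num_ne_zero ha) (RatFunc.denom_ne_zero b)),
    rootMultiplicity_mul (mul_ne_zero (RatFunc.denom_ne_zero a) (RatFunc.num_ne_zero hb))] at hadd
  rw [ordC_eq_of_eq_div hN hD h, rootMultiplicity_mul hD, ordC, ordC]
  omega

lemma add_ne_zero_of_ordC_lt {a b : RatFunc ℂ} (ha : a ≠ 0) {x : ℂ}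
    (hlt : ordC a x < ordC b x) : a + b ≠ 0 := by
  intro h
  rw [eq_neg_of_add_eq_zero_right h, ordC_neg ha] at hlt
  exact hlt.false

lemma ordC_add_of_lt {a b : RatFunc ℂ} (ha : a ≠ 0) (hb : b ≠ 0) {x : ℂ}
    (hlt : ordC a x < ordC b x) : ordC (a + b) x = ordC a x := by
  have hab := add_ne_zero_of_ordC_lt ha hlt
  have h₁ := min_ordC_le_ordC_add ha hb hab x
  have h₂ := min_ordC_le_ordC_add hab (neg_ne_zero.mpr hb) (by simpa using ha) x
  rw [add_neg_cancel_right, ordC_neg hb] at h₂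
  omega

lemma eval_num_eq_zero_iff {g : RatFunc ℂ} (hg : g ≠ 0) (x : ℂ) :
    g.num.eval x = 0 ↔ 0 < ordC g x := by
  rw [ordC, ← IsRoot.def, ← rootMultiplicity_pos (RatFunc.num_ne_zero hg)]
  rcases eval_num_ne_zero_or_eval_denom_ne_zero g x with h | h <;>
    simp [rootMultiplicity_eq_zero h]

lemma eval_denom_eq_zero_iff (g : RatFunc ℂ) (x : ℂ) :
    g.denom.eval x = 0 ↔ ordC g x < 0 := by
  rw [ordC, ← IsRoot.def, ← rootMultiplicity_pos (RatFunc.denom_ne_zero g)]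
  rcases eval_num_ne_zero_or_eval_denom_ne_zero g x with h | h <;>
    simp [rootMultiplicity_eq_zero h]

/-! ### The derivative -/

lemma algebraMap_div_eq_iff {p q r s : ℂ[X]} (hq : q ≠ 0) (hs : s ≠ 0) :
    ι p / ι q = ι r / ι s ↔ p * s = r * q := by
  rw [div_eq_div_iff (by simpa using hq) (by simpa using hs), ← map_mul, ← map_mul,
    (RatFunc.algebraMap_injective ℂ).eq_iff]

lemma deriv_algebraMap_div {p q : ℂ[X]} (hq : q ≠ 0) :
    deriv (ι p / ι q) = ι (derivative p * q - p * derivative q) / ι (q ^ 2) := by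
  generalize hg : ι p / ι q = g
  obtain ⟨s, rfl, rfl⟩ := eq_num_mul_and_eq_denom_mul hq hg.symm
  rw [deriv, algebraMap_div_eq_iff (pow_ne_zero 2 (RatFunc.denom_ne_zero _)) (pow_ne_zero 2 hq)]
  simp only [derivative_mul]
  ring

lemma deriv_algebraMap (p : ℂ[X]) : deriv (ι p) = ι (derivative p) := by
  simpa using deriv_algebraMap_div (p := p) one_ne_zero

lemma deriv_add (a b : RatFunc ℂ) : deriv (a + b) = deriv a + deriv b := by
  have ha := RatFunc.denom_ne_zero a
  have hb := RatFunc.denom_ne_zero b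
  rw [← RatFunc.num_div_denom a, ← RatFunc.num_div_denom b,
    div_add_div _ _ (by simpa using ha) (by simpa using hb), ← map_mul, ← map_mul, ← map_mul,
    ← map_add, deriv_algebraMap_div (mul_ne_zero ha hb), deriv_algebraMap_div ha,
    deriv_algebraMap_div hb, div_add_div _ _ (by simpa using ha) (by simpa using hb),
    ← map_mul, ← map_mul, ← map_mul, ← map_add, algebraMap_div_eq_iff (by simp [ha, hb])
      (by simp [ha, hb])]
  simp only [derivative_mul, derivative_add]
  ring

lemma deriv_mul (a b : RatFunc ℂ) : deriv (a * b) = a * deriv b + b * deriv a := by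
  have ha := RatFunc.denom_ne_zero a
  have hb := RatFunc.denom_ne_zero b
  rw [← RatFunc.num_div_denom a, ← RatFunc.num_div_denom b, div_mul_div_comm, ← map_mul,
    ← map_mul, deriv_algebraMap_div (mul_ne_zero ha hb), deriv_algebraMap_div ha,
    deriv_algebraMap_div hb, div_mul_div_comm, div_mul_div_comm,
    div_add_div _ _ (by simp [ha, hb]) (by simp [ha, hb])]
  simp only [← map_mul, ← map_add]
  rw [algebraMap_div_eq_iff (by simp [ha, hb]) (by simp [ha, hb])]
  simp only [derivative_mul]
  ring

lemma deriv_C (c : ℂ) : deriv (RatFunc.C c) = 0 := by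
  rw [← RatFunc.algebraMap_C, deriv_algebraMap, derivative_C, map_zero]

def derivation : Derivation ℂ (RatFunc ℂ) (RatFunc ℂ) :=
  Derivation.mk'
    { toFun := deriv
      map_add' := deriv_add
      map_smul' := fun c a => by
        simp only [RatFunc.smul_eq_C_mul, deriv_mul, deriv_C, RingHom.id_apply]
        ring }
    deriv_mul

lemma derivation_apply (g : RatFunc ℂ) : derivation g = deriv g := rfl

lemma deriv_sub_C (f : RatFunc ℂ) (c : ℂ) : deriv (f - RatFunc.C c) = deriv f := by
  rw [← derivation_apply, ← derivation_apply, map_sub, ← RatFunc.algebraMap_eq_C,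
    Derivation.map_algebraMap, sub_zero]

/-! ### Composition -/

def IsNonconstant (f : RatFunc ℂ) : Prop := ∀ c : ℂ, f ≠ RatFunc.C c

lemma IsNonconstant.ne_zero {f : RatFunc ℂ} (hf : IsNonconstant f) : f ≠ 0 := by
  simpa using hf 0

lemma aeval_eq_C_mul_prod (f : RatFunc ℂ) (p : ℂ[X]) :
    aeval f p = RatFunc.C p.leadingCoeff * (p.roots.map (f - RatFunc.C ·)).prod := by
  conv_lhs => rw [(IsAlgClosed.splits p).eq_prod_roots]
  simp [map_multiset_prod, Multiset.map_map, RatFunc.algebraMap_eq_C]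

lemma zero_notMem_map_sub_C {f : RatFunc ℂ} (hf : IsNonconstant f) (s : Multiset ℂ) :
    (0 : RatFunc ℂ) ∉ s.map (f - RatFunc.C ·) := by
  simpa [eq_comm (a := (0 : RatFunc ℂ)), sub_eq_zero] using fun a (_ : a ∈ s) => hf a

lemma aeval_ne_zero {f : RatFunc ℂ} (hf : IsNonconstant f) {p : ℂ[X]} (hp : p ≠ 0) :
    aeval f p ≠ 0 := by
  rw [aeval_eq_C_mul_prod]
  exact mul_ne_zero (by simpa using hp) (Multiset.prod_ne_zero (zero_notMem_map_sub_C hf _))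

def compAlgHom (f : RatFunc ℂ) (hf : IsNonconstant f) : RatFunc ℂ →ₐ[ℂ] RatFunc ℂ :=
  RatFunc.liftAlgHom (aeval f) fun p hp => by
    simpa using aeval_ne_zero hf (nonZeroDivisors.ne_zero hp)

lemma comp_eq_compAlgHom {f : RatFunc ℂ} (hf : IsNonconstant f) (g : RatFunc ℂ) :
    comp g f = compAlgHom f hf g := by
  rw [compAlgHom, RatFunc.liftAlgHom_apply]
  rfl

lemma compAlgHom_algebraMap {f : RatFunc ℂ} (hf : IsNonconstant f) (p : ℂ[X]) :
    compAlgHom f hf (ι p) = aeval f p := by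
  rw [← comp_eq_compAlgHom hf, comp, RatFunc.num_algebraMap, RatFunc.denom_algebraMap, map_one,
    div_one]

lemma comp_ne_zero {f g : RatFunc ℂ} (hf : IsNonconstant f) (hg : g ≠ 0) : comp g f ≠ 0 := by
  rw [comp_eq_compAlgHom hf]
  exact (_root_.map_ne_zero _).mpr hg

lemma comp_C {f : RatFunc ℂ} (hf : IsNonconstant f) (c : ℂ) :
    comp (RatFunc.C c) f = RatFunc.C c := by
  rw [comp_eq_compAlgHom hf, ← RatFunc.algebraMap_eq_C, AlgHom.commutes]

lemma IsNonconstant.comp {f g : RatFunc ℂ} (hg : IsNonconstant g) (hf : IsNonconstant f) :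
    IsNonconstant (comp g f) := by
  intro c hc
  rw [← comp_C hf, comp_eq_compAlgHom hf, comp_eq_compAlgHom hf] at hc
  exact hg c ((compAlgHom f hf).toRingHom.injective hc)

lemma comp_comp {c : RatFunc ℂ} (hc : IsNonconstant c) (f g : RatFunc ℂ) :
    comp (comp g f) c = comp g (comp f c) := by
  rw [comp_eq_compAlgHom hc (comp g f), comp, comp, map_div₀,
    ← aeval_algHom_apply, ← aeval_algHom_apply, ← comp_eq_compAlgHom hc]

lemma deriv_comp {f : RatFunc ℂ} (hf : IsNonconstant f) (g : RatFunc ℂ) :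
    deriv (comp g f) = comp (deriv g) f * deriv f := by
  have hD := aeval_ne_zero hf (RatFunc.denom_ne_zero g)
  have hg : deriv g =
      ι (derivative g.num * g.denom - g.num * derivative g.denom) / ι (g.denom ^ 2) := rfl
  rw [← derivation_apply, comp, Derivation.leibniz_div, Derivation.map_aeval,
    Derivation.map_aeval, comp_eq_compAlgHom hf, hg, map_div₀, compAlgHom_algebraMap,
    compAlgHom_algebraMap, map_sub, map_mul, map_mul, map_pow, derivation_apply]
  simp only [smul_eq_mul]
  field_simp

lemma pullback_comp {c : RatFunc ℂ} (hc : IsNonconstant c) (k : ℕ) (f g : RatFunc ℂ) :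
    pullback k (comp f c) g = pullback k c (pullback k f g) := by
  rw [pullback, pullback, pullback, ← comp_comp hc, deriv_comp hc, comp_eq_compAlgHom hc,
    comp_eq_compAlgHom hc, comp_eq_compAlgHom hc, map_mul, map_pow]
  ring

/-! ### Orders of compositions and derivatives -/

lemma ordC_aeval {f : RatFunc ℂ} (hf : IsNonconstant f) {p : ℂ[X]} (hp : p ≠ 0) (y : ℂ) :
    ordC (aeval f p) y = (p.roots.map fun a => ordC (f - RatFunc.C a) y).sum := by
  rw [aeval_eq_C_mul_prod, ordC_C_mul (by simpa using hp)
    (Multiset.prod_ne_zero (zero_notMem_map_sub_C hf _)),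
    ordC_multiset_prod (zero_notMem_map_sub_C hf _), Multiset.map_map]
  rfl

lemma ordC_sub_C_of_neg {f : RatFunc ℂ} (hf : f ≠ 0) {y : ℂ} (hy : ordC f y < 0) (a : ℂ) :
    ordC (f - RatFunc.C a) y = ordC f y := by
  rcases eq_or_ne a 0 with rfl | ha
  · simp
  rw [sub_eq_add_neg, ← map_neg]
  exact ordC_add_of_lt hf (by simpa using ha) (by rwa [ordC_C (neg_ne_zero.mpr ha)])

lemma ordC_sub_C_of_ne {f : RatFunc ℂ} (hf : IsNonconstant f) {x y : ℂ}
    (hxy : 0 < ordC (f - RatFunc.C x) y) {a : ℂ} (ha : a ≠ x) :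
    ordC (f - RatFunc.C a) y = 0 := by
  have hxa : x - a ≠ 0 := sub_ne_zero.mpr ha.symm
  have h : f - RatFunc.C a = RatFunc.C (x - a) + (f - RatFunc.C x) := by
    rw [map_sub]
    ring
  rw [h, ordC_add_of_lt ((_root_.map_ne_zero _).mpr hxa) (sub_ne_zero.mpr (hf x))
    (by rwa [ordC_C hxa]), ordC_C hxa]

lemma ordC_aeval_of_neg {f : RatFunc ℂ} (hf : IsNonconstant f) {p : ℂ[X]} (hp : p ≠ 0) {y : ℂ}
    (hy : ordC f y < 0) : ordC (aeval f p) y = p.natDegree * ordC f y := by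
  rw [ordC_aeval hf hp, Multiset.map_congr rfl fun a _ => ordC_sub_C_of_neg hf.ne_zero hy a,
    Multiset.map_const', Multiset.sum_replicate, ← (IsAlgClosed.splits p).natDegree_eq_card_roots,
    nsmul_eq_mul]

lemma ordC_aeval_of_pos {f : RatFunc ℂ} (hf : IsNonconstant f) {p : ℂ[X]} (hp : p ≠ 0)
    {x y : ℂ} (hxy : 0 < ordC (f - RatFunc.C x) y) :
    ordC (aeval f p) y = p.rootMultiplicity x * ordC (f - RatFunc.C x) y := by
  classical
  rw [ordC_aeval hf hp, Multiset.sum_map_eq_nsmul_single x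
    (fun a ha _ => ordC_sub_C_of_ne hf hxy ha), count_roots, nsmul_eq_mul]

lemma ordC_comp_of_neg {f : RatFunc ℂ} (hf : IsNonconstant f) {g : RatFunc ℂ} (hg : g ≠ 0)
    {y : ℂ} (hy : ordC f y < 0) : ordC (comp g f) y = g.intDegree * ordC f y := by
  rw [comp, ordC_div (aeval_ne_zero hf (RatFunc.num_ne_zero hg))
      (aeval_ne_zero hf (RatFunc.denom_ne_zero g)),
    ordC_aeval_of_neg hf (RatFunc.num_ne_zero hg) hy,
    ordC_aeval_of_neg hf (RatFunc.denom_ne_zero g) hy, RatFunc.intDegree]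
  ring

lemma ordC_comp_of_pos {f : RatFunc ℂ} (hf : IsNonconstant f) {g : RatFunc ℂ} (hg : g ≠ 0)
    {x y : ℂ} (hxy : 0 < ordC (f - RatFunc.C x) y) :
    ordC (comp g f) y = ordC g x * ordC (f - RatFunc.C x) y := by
  rw [comp, ordC_div (aeval_ne_zero hf (RatFunc.num_ne_zero hg))
      (aeval_ne_zero hf (RatFunc.denom_ne_zero g)),
    ordC_aeval_of_pos hf (RatFunc.num_ne_zero hg) hxy,
    ordC_aeval_of_pos hf (RatFunc.denom_ne_zero g) hxy]
  unfold ordC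
  ring

lemma derivative_ne_zero_of_isRoot {p : ℂ[X]} (hp : p ≠ 0) {y : ℂ} (hy : p.IsRoot y) :
    derivative p ≠ 0 := by
  intro h
  rw [eq_C_of_natDegree_eq_zero (derivative_eq_zero.mp h)] at hp hy
  simp_all

lemma ordC_deriv_of_pos {h : RatFunc ℂ} (hh : h ≠ 0) {y : ℂ} (hy : 0 < ordC h y) :
    deriv h ≠ 0 ∧ ordC (deriv h) y = ordC h y - 1 := by
  have hN := RatFunc.num_ne_zero hh
  have hD := RatFunc.denom_ne_zero h
  have hDy : h.denom.eval y ≠ 0 := by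
    rw [Ne, eval_denom_eq_zero_iff]
    omega
  have hNy : h.num.IsRoot y := (eval_num_eq_zero_iff hh y).mpr hy
  have hN' := derivative_ne_zero_of_isRoot hN hNy
  set a := ι (derivative h.num) * ι h.denom
  set b := -(ι h.num * ι (derivative h.denom))
  have ha0 : a ≠ 0 := by simp [a, hN', hD]
  have ha : ordC a y = ordC h y - 1 := by
    rw [ordC_mul (by simpa using hN') (by simpa using hD), ordC_algebraMap hN',
      ordC_algebraMap hD, derivative_rootMultiplicity_of_root hNy, ordC,
      rootMultiplicity_eq_zero hDy, Nat.cast_sub ((rootMultiplicity_pos hN).mpr hNy)]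
    ring
  have hab : a + b ≠ 0 ∧ ordC (a + b) y = ordC h y - 1 := by
    rcases eq_or_ne (derivative h.denom) 0 with hD' | hD'
    · simp [b, hD', ha0, ha]
    have hb0 : b ≠ 0 := by simp [b, hD', hN]
    have hb : ordC h y ≤ ordC b y := by
      rw [ordC_neg (neg_ne_zero.mp hb0), ordC_mul (by simpa using hN) (by simpa using hD'),
        ordC_algebraMap hN, ordC_algebraMap hD', ordC, rootMultiplicity_eq_zero hDy]
      omega
    exact ⟨add_ne_zero_of_ordC_lt ha0 (x := y) (by omega),
      by rw [ordC_add_of_lt ha0 hb0 (by omega), ha]⟩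
  have hderiv : deriv h = (a + b) / ι (h.denom ^ 2) := by
    rw [deriv, map_sub, map_mul, map_mul, sub_eq_add_neg]
  have hD2 : ι (h.denom ^ 2) ≠ 0 := by simpa using hD
  refine ⟨hderiv ▸ div_ne_zero hab.1 hD2, ?_⟩
  rw [hderiv, ordC_div hab.1 hD2, hab.2, ordC_algebraMap (pow_ne_zero 2 hD),
    rootMultiplicity_eq_zero (by simpa using hDy)]
  simp

lemma ordC_deriv {h : RatFunc ℂ} (hh : h ≠ 0) {y : ℂ} (hy : ordC h y ≠ 0) :
    deriv h ≠ 0 ∧ ordC (deriv h) y = ordC h y - 1 := by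
  rcases hy.lt_or_gt with hneg | hpos
  · have hinv := inv_ne_zero hh
    obtain ⟨hd0, hd⟩ := ordC_deriv_of_pos hinv (by rw [ordC_inv hh y]; omega)
    have hderiv : deriv h = -h ^ 2 * deriv h⁻¹ := by
      rw [← derivation_apply, ← derivation_apply, ← inv_inv h, Derivation.leibniz_inv, inv_inv,
        smul_eq_mul]
    rw [hderiv]
    refine ⟨by simp [hh, hd0], ?_⟩
    rw [ordC_mul (by simp [hh]) hd0, ordC_neg (by simp [hh]), ordC_pow hh, hd, ordC_inv hh]
    ring
  · exact ordC_deriv_of_pos hh hpos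

/-! ### Values and local degrees at finite points -/

lemma sub_C_eq_div (f : RatFunc ℂ) (c : ℂ) :
    f - RatFunc.C c = ι (f.num - Polynomial.C c * f.denom) / ι f.denom := by
  rw [map_sub, sub_div, RatFunc.num_div_denom, map_mul, mul_div_assoc,
    div_self (by simp [RatFunc.denom_ne_zero]), mul_one, RatFunc.algebraMap_C]

lemma num_sub_C_mul_denom_ne_zero {f : RatFunc ℂ} (hf : IsNonconstant f) (c : ℂ) :
    f.num - Polynomial.C c * f.denom ≠ 0 := by
  intro h
  exact hf c (by rw [← sub_eq_zero, sub_C_eq_div, h, map_zero, zero_div])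

lemma evalP1_coe_of_eval_denom_eq_zero {f : RatFunc ℂ} {y : ℂ} (hy : f.denom.eval y = 0) :
    evalP1 f y = ∞ :=
  if_pos hy

lemma evalP1_coe_of_eval_denom_ne_zero {f : RatFunc ℂ} {y : ℂ} (hy : f.denom.eval y ≠ 0) :
    evalP1 f y = ↑(f.num.eval y / f.denom.eval y) :=
  if_neg hy

lemma evalP1_coe_eq_of_ordC_sub_C_pos {f : RatFunc ℂ} (hf : IsNonconstant f) {c y : ℂ}
    (h : 0 < ordC (f - RatFunc.C c) y) : evalP1 f y = c := by
  have hP := num_sub_C_mul_denom_ne_zero hf c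
  rw [ordC_eq_of_eq_div hP (RatFunc.denom_ne_zero f) (sub_C_eq_div f c)] at h
  have hPy : (f.num - Polynomial.C c * f.denom).IsRoot y := by
    by_contra hy
    rw [rootMultiplicity_eq_zero hy] at h
    omega
  have hDy : f.denom.eval y ≠ 0 := fun hDy =>
    (eval_num_ne_zero_or_eval_denom_ne_zero f y).elim (fun hN => hN (by simpa [hDy] using hPy))
      (· hDy)
  rw [evalP1_coe_of_eval_denom_ne_zero hDy, OnePoint.coe_eq_coe, div_eq_iff hDy]
  simpa [sub_eq_zero] using hPy

lemma ordC_sub_C_eval_pos {f : RatFunc ℂ} (hf : IsNonconstant f) {y : ℂ}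
    (hy : f.denom.eval y ≠ 0) :
    0 < ordC (f - RatFunc.C (f.num.eval y / f.denom.eval y)) y := by
  set c := f.num.eval y / f.denom.eval y
  have hP := num_sub_C_mul_denom_ne_zero hf c
  have hPy : (f.num - Polynomial.C c * f.denom).IsRoot y := by
    simp [c, div_mul_cancel₀ _ hy]
  rw [ordC_eq_of_eq_div hP (RatFunc.denom_ne_zero f) (sub_C_eq_div f c),
    rootMultiplicity_eq_zero hy]
  simpa using (rootMultiplicity_pos hP).mpr hPy

lemma locDegC_of_eval_denom_ne_zero {f : RatFunc ℂ} (hf : IsNonconstant f) {y : ℂ}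
    (hy : f.denom.eval y ≠ 0) :
    (locDegC f y : ℤ) = ordC (f - RatFunc.C (f.num.eval y / f.denom.eval y)) y := by
  rw [locDegC, if_neg hy, Int.toNat_of_nonneg (ordC_sub_C_eval_pos hf hy).le]

lemma locDegC_of_eval_denom_eq_zero {f : RatFunc ℂ} {y : ℂ} (hy : f.denom.eval y = 0) :
    (locDegC f y : ℤ) = -ordC f y := by
  have hN := (eval_num_ne_zero_or_eval_denom_ne_zero f y).resolve_right (not_not.mpr hy)
  rw [locDegC, if_pos hy, ordC, rootMultiplicity_eq_zero hN]
  simp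

lemma locDegC_pos {f : RatFunc ℂ} (hf : IsNonconstant f) (y : ℂ) : 0 < locDegC f y := by
  by_cases hy : f.denom.eval y = 0
  · have := locDegC_of_eval_denom_eq_zero hy
    have := (eval_denom_eq_zero_iff f y).mp hy
    omega
  · have := locDegC_of_eval_denom_ne_zero hf hy
    have := ordC_sub_C_eval_pos hf hy
    omega

lemma ordC_pullback_add {f g : RatFunc ℂ} (hf : IsNonconstant f) (hg : g ≠ 0) (k : ℕ) (y : ℂ) :
    ordC (pullback k f g) y + k = locDegC f y * (ordDiff k g (evalP1 f y) + k) := by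
  by_cases hy : f.denom.eval y = 0
  · have hpole := (eval_denom_eq_zero_iff f y).mp hy
    obtain ⟨hd0, hd⟩ := ordC_deriv hf.ne_zero hpole.ne
    rw [evalP1_coe_of_eval_denom_eq_zero hy, locDegC_of_eval_denom_eq_zero hy, pullback,
      ordC_mul (comp_ne_zero hf hg) (pow_ne_zero k hd0), ordC_pow hd0, hd,
      ordC_comp_of_neg hf hg hpole]
    simp only [ordDiff, Option.elim]
    ring
  · set c := f.num.eval y / f.denom.eval y
    have hpos := ordC_sub_C_eval_pos hf hy
    obtain ⟨hd0, hd⟩ := ordC_deriv (sub_ne_zero.mpr (hf c)) hpos.ne'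
    rw [evalP1_coe_of_eval_denom_ne_zero hy, locDegC_of_eval_denom_ne_zero hf hy, pullback,
      ← deriv_sub_C f c, ordC_mul (comp_ne_zero hf hg) (pow_ne_zero k hd0), ordC_pow hd0, hd,
      ordC_comp_of_pos hf hg hpos]
    simp only [ordDiff, Option.elim]
    ring

/-! ### The chart at infinity -/

lemma isNonconstant_X_inv : IsNonconstant (RatFunc.X⁻¹ : RatFunc ℂ) := by
  intro c hc
  simpa [RatFunc.intDegree_inv, RatFunc.intDegree_X, RatFunc.intDegree_C] using
    congrArg RatFunc.intDegree hc

lemma aeval_X_inv (p : ℂ[X]) :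
    aeval (RatFunc.X⁻¹ : RatFunc ℂ) p = ι p.reverse * RatFunc.X⁻¹ ^ p.natDegree := by
  let : Invertible (RatFunc.X⁻¹ : RatFunc ℂ) := invertibleOfNonzero (inv_ne_zero RatFunc.X_ne_zero)
  rw [aeval_def, ← eval₂_reflect_mul_pow _ _ _ p le_rfl, invOf_eq_inv, inv_inv, reverse,
    ← aeval_def, RatFunc.aeval_X_left_eq_algebraMap]

lemma ordC_X_zero : ordC (RatFunc.X : RatFunc ℂ) 0 = 1 := by
  rw [← RatFunc.algebraMap_X, ordC_algebraMap X_ne_zero, ← sub_zero X, ← map_zero C,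
    rootMultiplicity_X_sub_C_self, Nat.cast_one]

lemma ordC_aeval_X_inv {p : ℂ[X]} (hp : p ≠ 0) :
    ordC (aeval (RatFunc.X⁻¹ : RatFunc ℂ) p) 0 = -p.natDegree := by
  have hrev : p.reverse.eval 0 ≠ 0 := by
    rwa [← coeff_zero_eq_eval_zero, coeff_zero_reverse, leadingCoeff_ne_zero]
  have hrev0 : p.reverse ≠ 0 := fun h => hrev (by simp [h])
  rw [aeval_X_inv, ordC_mul (by simpa using hrev0) (by simp [RatFunc.X_ne_zero]),
    ordC_algebraMap hrev0, rootMultiplicity_eq_zero hrev, ordC_pow (by simp [RatFunc.X_ne_zero]),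
    ordC_inv RatFunc.X_ne_zero, ordC_X_zero]
  simp

lemma ordC_comp_X_inv {g : RatFunc ℂ} (hg : g ≠ 0) :
    ordC (comp g RatFunc.X⁻¹) 0 = -g.intDegree := by
  rw [comp, ordC_div (aeval_ne_zero isNonconstant_X_inv (RatFunc.num_ne_zero hg))
      (aeval_ne_zero isNonconstant_X_inv (RatFunc.denom_ne_zero g)),
    ordC_aeval_X_inv (RatFunc.num_ne_zero hg), ordC_aeval_X_inv (RatFunc.denom_ne_zero g),
    RatFunc.intDegree]
  ring

lemma deriv_X_inv : deriv (RatFunc.X⁻¹ : RatFunc ℂ) = -RatFunc.X⁻¹ ^ 2 := by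
  rw [← derivation_apply, Derivation.leibniz_inv, derivation_apply, ← RatFunc.algebraMap_X,
    deriv_algebraMap, derivative_X, map_one, smul_eq_mul, mul_one]

lemma ordC_pullback_X_inv {h : RatFunc ℂ} (hh : h ≠ 0) (k : ℕ) :
    ordC (pullback k RatFunc.X⁻¹ h) 0 = ordDiff k h ∞ := by
  have hX : (RatFunc.X⁻¹ : RatFunc ℂ) ≠ 0 := inv_ne_zero RatFunc.X_ne_zero
  have hd : deriv (RatFunc.X⁻¹ : RatFunc ℂ) ≠ 0 := by simp [deriv_X_inv, RatFunc.X_ne_zero]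
  rw [pullback, ordC_mul (comp_ne_zero isNonconstant_X_inv hh) (pow_ne_zero k hd),
    ordC_pow hd, deriv_X_inv, ordC_neg (by simp [RatFunc.X_ne_zero]), ordC_pow hX,
    ordC_inv RatFunc.X_ne_zero, ordC_X_zero, ordC_comp_X_inv hh]
  simp only [ordDiff, Option.elim]
  push_cast
  ring

lemma evalP1_infty_of_intDegree_pos {f : RatFunc ℂ} (h : 0 < f.intDegree) : evalP1 f ∞ = ∞ :=
  if_pos h

lemma evalP1_infty_of_intDegree_neg {f : RatFunc ℂ} (h : f.intDegree < 0) :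
    evalP1 f ∞ = (0 : ℂ) :=
  (if_neg h.not_gt).trans (if_pos h)

lemma evalP1_infty_of_intDegree_eq_zero {f : RatFunc ℂ} (h : f.intDegree = 0) :
    evalP1 f ∞ = ↑(f.num.leadingCoeff / f.denom.leadingCoeff) :=
  (if_neg h.not_gt).trans (if_neg h.not_lt)

lemma intDegree_algebraMap_div {p q : ℂ[X]} (hp : p ≠ 0) (hq : q ≠ 0) :
    (ι p / ι q).intDegree = p.natDegree - q.natDegree := by
  rw [div_eq_mul_inv, RatFunc.intDegree_mul (by simpa using hp) (by simpa using hq),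
    RatFunc.intDegree_inv, RatFunc.intDegree_polynomial, RatFunc.intDegree_polynomial,
    sub_eq_add_neg]

lemma comp_X_inv_sub_C (f : RatFunc ℂ) (c : ℂ) :
    comp (f - RatFunc.C c) RatFunc.X⁻¹ = comp f RatFunc.X⁻¹ - RatFunc.C c := by
  rw [comp_eq_compAlgHom isNonconstant_X_inv, comp_eq_compAlgHom isNonconstant_X_inv, map_sub,
    ← RatFunc.algebraMap_eq_C, AlgHom.commutes]

lemma intDegree_sub_C_neg {f : RatFunc ℂ} (hf : IsNonconstant f) (h : f.intDegree = 0) :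
    (f - RatFunc.C (f.num.leadingCoeff / f.denom.leadingCoeff)).intDegree < 0 := by
  set c := f.num.leadingCoeff / f.denom.leadingCoeff
  have hN := RatFunc.num_ne_zero hf.ne_zero
  have hD := RatFunc.denom_ne_zero f
  have hc : c ≠ 0 := div_ne_zero (leadingCoeff_ne_zero.mpr hN) (leadingCoeff_ne_zero.mpr hD)
  have hP := num_sub_C_mul_denom_ne_zero hf c
  have hdeg : f.num.natDegree = f.denom.natDegree := by
    rw [RatFunc.intDegree] at h
    omega
  have hlt : (f.num - Polynomial.C c * f.denom).degree < f.num.degree := by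
    refine degree_sub_lt_left ?_ hN ?_
    · rw [degree_C_mul hc, degree_eq_natDegree hN, degree_eq_natDegree hD, hdeg]
    · rw [leadingCoeff_C_mul_of_isUnit (isUnit_iff_ne_zero.mpr hc),
        div_mul_cancel₀ _ (leadingCoeff_ne_zero.mpr hD)]
  rw [sub_C_eq_div, intDegree_algebraMap_div hP hD, ← hdeg, sub_neg, Nat.cast_lt]
  exact natDegree_lt_natDegree hP hlt

lemma evalP1_infty {f : RatFunc ℂ} (hf : IsNonconstant f) :
    evalP1 f ∞ = evalP1 (comp f RatFunc.X⁻¹) (0 : ℂ) := by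
  have hf₁ := hf.comp isNonconstant_X_inv
  have hord := ordC_comp_X_inv hf.ne_zero
  rcases lt_trichotomy f.intDegree 0 with hneg | hzero | hpos
  · rw [evalP1_infty_of_intDegree_neg hneg, evalP1_coe_eq_of_ordC_sub_C_pos hf₁]
    simpa [hord] using hneg
  · rw [evalP1_infty_of_intDegree_eq_zero hzero, evalP1_coe_eq_of_ordC_sub_C_pos hf₁]
    have hne := sub_ne_zero.mpr (hf (f.num.leadingCoeff / f.denom.leadingCoeff))
    rw [← comp_X_inv_sub_C, ordC_comp_X_inv hne]
    linarith [intDegree_sub_C_neg hf hzero]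
  · rw [evalP1_infty_of_intDegree_pos hpos, evalP1_coe_of_eval_denom_eq_zero]
    rw [eval_denom_eq_zero_iff, hord]
    omega

/-! ### Global properties -/

lemma IsNonconstant.deriv_ne_zero {f : RatFunc ℂ} (hf : IsNonconstant f) : deriv f ≠ 0 := by
  obtain ⟨y, hy⟩ := Infinite.exists_notMem_finset f.denom.roots.toFinset
  have hy : f.denom.eval y ≠ 0 := by simpa [RatFunc.denom_ne_zero] using hy
  rw [← deriv_sub_C f (f.num.eval y / f.denom.eval y)]
  exact (ordC_deriv (sub_ne_zero.mpr (hf _)) (ordC_sub_C_eval_pos hf hy).ne').1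

lemma pullback_ne_zero {f g : RatFunc ℂ} (hf : IsNonconstant f) (hg : g ≠ 0) (k : ℕ) :
    pullback k f g ≠ 0 :=
  mul_ne_zero (comp_ne_zero hf hg) (pow_ne_zero k hf.deriv_ne_zero)

theorem ordDiff_pullback_add {f g : RatFunc ℂ} (hf : IsNonconstant f) (hg : g ≠ 0) (k : ℕ)
    (z : P1) :
    ordDiff k (pullback k f g) z + k = locDeg f z * (ordDiff k g (evalP1 f z) + k) := by
  induction z using OnePoint.rec with
  | infty =>
    rw [← ordC_pullback_X_inv (pullback_ne_zero hf hg k), ← pullback_comp isNonconstant_X_inv,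
      evalP1_infty hf]
    exact ordC_pullback_add (hf.comp isNonconstant_X_inv) hg k 0
  | coe y => exact ordC_pullback_add hf hg k y

lemma ordDiff_C_mul {c : ℂ} (hc : c ≠ 0) {g : RatFunc ℂ} (hg : g ≠ 0) (k : ℕ) :
    ordDiff k (RatFunc.C c * g) = ordDiff k g := by
  funext z
  induction z using OnePoint.rec with
  | infty =>
    simp only [ordDiff, Option.elim]
    rw [RatFunc.intDegree_mul (by simpa using hc) hg, RatFunc.intDegree_C, zero_add]
  | coe y => exact ordC_C_mul hc hg y

lemma locDeg_pos {f : RatFunc ℂ} (hf : IsNonconstant f) (z : P1) : 0 < locDeg f z := by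
  induction z using OnePoint.rec with
  | infty => exact locDegC_pos (hf.comp isNonconstant_X_inv) 0
  | coe y => exact locDegC_pos hf y

lemma exists_isRoot_or_natDegree_eq_zero (p : ℂ[X]) : (∃ z, p.IsRoot z) ∨ p.natDegree = 0 :=
  or_iff_not_imp_right.mpr fun h => IsAlgClosed.exists_root p (degree_ne_of_natDegree_ne h)

lemma IsNonconstant.natDegree_num_ne_zero_or {f : RatFunc ℂ} (hf : IsNonconstant f) :
    f.num.natDegree ≠ 0 ∨ f.denom.natDegree ≠ 0 := by
  by_contra! h
  apply hf (f.num.coeff 0 / f.denom.coeff 0)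
  conv_lhs => rw [← RatFunc.num_div_denom f, eq_C_of_natDegree_eq_zero h.1,
    eq_C_of_natDegree_eq_zero h.2]
  simp

lemma evalP1_surjective {f : RatFunc ℂ} (hf : IsNonconstant f) :
    Function.Surjective (evalP1 f) := by
  intro x
  induction x using OnePoint.rec with
  | infty =>
    rcases exists_isRoot_or_natDegree_eq_zero f.denom with ⟨y, hy⟩ | hD
    · exact ⟨y, evalP1_coe_of_eval_denom_eq_zero hy⟩
    · refine ⟨∞, evalP1_infty_of_intDegree_pos ?_⟩
      have := hf.natDegree_num_ne_zero_or
      rw [RatFunc.intDegree, hD]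
      omega
  | coe c =>
    have hh : IsNonconstant (f - RatFunc.C c) := fun a ha =>
      hf (c + a) (by rw [map_add, ← ha]; ring)
    rcases exists_isRoot_or_natDegree_eq_zero (f - RatFunc.C c).num with ⟨y, hy⟩ | hN
    · exact ⟨y, evalP1_coe_eq_of_ordC_sub_C_pos hf ((eval_num_eq_zero_iff hh.ne_zero y).mp hy)⟩
    · refine ⟨∞, (evalP1_infty hf).trans
        (evalP1_coe_eq_of_ordC_sub_C_pos (hf.comp isNonconstant_X_inv) ?_)⟩
      rw [← comp_X_inv_sub_C, ordC_comp_X_inv hh.ne_zero, RatFunc.intDegree, hN]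
      have := hh.natDegree_num_ne_zero_or
      omega

lemma finite_setOf_ordDiff_pos {g : RatFunc ℂ} (hg : g ≠ 0) (k : ℕ) :
    {z : P1 | 0 < ordDiff k g z}.Finite := by
  refine ((g.num.rootSet ℂ).toFinite.image ((↑) : ℂ → P1)).insert ∞ |>.subset ?_
  intro z hz
  induction z using OnePoint.rec with
  | infty => exact Set.mem_insert _ _
  | coe y =>
    refine Set.mem_insert_of_mem _ ⟨y, ?_, rfl⟩
    rw [mem_rootSet_of_ne (RatFunc.num_ne_zero hg), coe_aeval_eq_eval]
    exact (eval_num_eq_zero_iff hg y).mpr hz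

lemma isNonconstant_of_degRat_pos {f : RatFunc ℂ} (hf : 0 < degRat f) : IsNonconstant f := by
  rintro c rfl
  simp [degRat] at hf

/-- If `t = e · (t ∘ T)` with `e ≥ 1` and `T` surjective, the finite set `{t > c}` is completely
invariant, so `T` permutes it; comparing `∏ t` with `∏ e · ∏ t` over it gives `e = 1` there. -/
theorem eq_one_of_finite_setOf_lt {α : Type*} {T : α → α} (hT : Function.Surjective T)
    {t : α → ℤ} {e : α → ℕ} (hte : ∀ z, t z = e z * t (T z)) (he : ∀ z, 0 < e z) {c : ℤ}
    (hc : 0 ≤ c) (hfin : {z | c < t z}.Finite) {y : α} (hy : c < t y) : e y = 1 := by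
  set S := {z | c < t z}
  have hpre : T ⁻¹' S ⊆ S := fun z (hz : c < t (T z)) => by
    change c < t z
    rw [hte z]
    nlinarith [(Nat.one_le_cast (α := ℤ)).mpr (he z)]
  have hpre_eq : T ⁻¹' S = S := by
    refine Set.eq_of_subset_of_ncard_le hpre ?_ hfin
    calc S.ncard = (T '' (T ⁻¹' S)).ncard := by rw [Set.image_preimage_eq S hT]
      _ ≤ (T ⁻¹' S).ncard := Set.ncard_image_le (hfin.subset hpre)
  have hmaps : Set.MapsTo T S S := fun z hz => by rwa [← hpre_eq] at hz
  have hbij : Set.BijOn T S S := (hfin.surjOn_iff_bijOn_of_mapsTo hmaps).mp fun s hs => by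
    obtain ⟨w, rfl⟩ := hT s
    exact ⟨w, hpre hs, rfl⟩
  set F := hfin.toFinset
  have hmem : ∀ z, z ∈ F ↔ z ∈ S := fun z => hfin.mem_toFinset
  have hperm : ∏ z ∈ F, t (T z) = ∏ z ∈ F, t z :=
    Finset.prod_nbij T (fun z hz => (hmem _).mpr (hmaps ((hmem z).mp hz)))
      (by simpa [F] using hbij.injOn) (by simpa [F] using hbij.surjOn) fun _ _ => rfl
  have hprod : ∏ z ∈ F, t z = (∏ z ∈ F, (e z : ℤ)) * ∏ z ∈ F, t z := by
    conv_lhs => rw [Finset.prod_congr rfl fun z _ => hte z]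
    rw [Finset.prod_mul_distrib, hperm]
  have ht : ∏ z ∈ F, t z ≠ 0 :=
    Finset.prod_ne_zero_iff.mpr fun z hz => by
      have : c < t z := (hmem z).mp hz
      omega
  have he1 : ∏ z ∈ F, e z = 1 := by
    have := (mul_eq_right₀ ht).mp hprod.symm
    exact_mod_cast this
  exact Nat.dvd_one.mp (he1 ▸ Finset.dvd_prod_of_mem e ((hmem y).mpr hy))

end ParallelTensor

theorem stmt_7_general (f g : RatFunc ℂ) (d k : ℕ) (lam : ℂ)
    (hdeg : ParallelTensor.degRat f = d) (hd : 1 < d)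
    (hg : g ≠ 0) (hlam : lam ≠ 0)
    (heq : ParallelTensor.pullback k f g = RatFunc.C lam * g) :
    ∀ x : P1, ∀ m : ℕ, ParallelTensor.ordDiff k g x = -(m : ℤ) → 0 < m → m < k →
      ∀ y : P1, ParallelTensor.evalP1 f y = x →
        ParallelTensor.locDeg f y * (k - m) ≤ k := by
  open ParallelTensor in
  intro x m hx _ hmk y hy
  have hf : IsNonconstant f := isNonconstant_of_degRat_pos (by omega)
  set t : P1 → ℤ := fun z => ordDiff k g z + k
  have hte : ∀ z, t z = locDeg f z * t (evalP1 f z) := fun z => by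
    simpa [heq, ordDiff_C_mul hlam hg] using ordDiff_pullback_add hf hg k z
  have hty : t y = locDeg f y * (k - m : ℕ) := by
    rw [hte, hy, Nat.cast_sub hmk.le]
    simp only [t, hx]
    ring
  by_contra! hlt
  have hfin : {z | (k : ℤ) < t z}.Finite := by
    simpa [t] using finite_setOf_ordDiff_pos hg k
  have hone := eq_one_of_finite_setOf_lt (evalP1_surjective hf) hte (locDeg_pos hf)
    (Nat.cast_nonneg k) hfin (by rw [hty]; exact_mod_cast hlt)
  rw [hone] at hlt
  omega

/-- If `f*q = λ·q` and `x` is a pole of `q` of order `m < k`, then every preimage `y` of `x`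
has local degree at most `k/(k-m)`, i.e. `deg_y(f)·(k - m) ≤ k`. -/
theorem stmt_7 (f g : RatFunc ℂ) (d k : ℕ) (lam : ℂ)
    (hdeg : ParallelTensor.degRat f = d) (hd : 1 < d) (hk : 1 ≤ k)
    (hg : g ≠ 0) (hlam : lam ≠ 0)
    (heq : ParallelTensor.pullback k f g = RatFunc.C lam * g) :
    ∀ x : P1, ∀ m : ℕ, ParallelTensor.ordDiff k g x = -(m : ℤ) → 0 < m → m < k →
      ∀ y : P1, ParallelTensor.evalP1 f y = x →
        ParallelTensor.locDeg f y * (k - m) ≤ k :=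
  stmt_7_general f g d k lam hdeg hd hg hlam heq

end
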